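/- Let k be a positive integer with k ≡ 0 (mod 4) and k ≥ 8, and let n be an integer with 0 ≤ n ≤ k/2 − 2. Then (deriv Λ_k)(2n+2) = 2·(2π)^{−k} · (2n+1)! · (k−2n−3)! · (−1)^{n+1} · ζ(2n+2) · ζ(k−2n−2) · ( H_{2n+1} − H_{k−2n−3} + ζ'(2n+2)/ζ(2n+2) − ζ'(k−2n−2)/ζ(k−2n−2) ), as an identity of complex numbers. -/

import Mathlib

/-! Near `s = 2n + 2` the functional equation of `ζ` turns `ζ(s - k + 1) = ζ(1 - (k - s))` into
`ζ(k - s)`, so that `Λ_k(s) = 2 (2π)^(-k) cos(π(k - s)/2) · Γ(s)ζ(s) · Γ(k - s)ζ(k - s)`, with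
both `ζ`-arguments of real part `> 1`. As `k - s` is even there, the cosine is stationary with
value `±1`, and `Γ'(m + 1) = m! (H_m - γ)` gives the rest; the two `γ`'s cancel. -/

open Complex

/-- The completed `L`-function of the weight-`k` Eisenstein series `E_k`:
`Λ_k(s) = (2π)^(−s) · Γ(s) · ζ(s) · ζ(s−k+1)`. -/
noncomputable def completedEisensteinL (k : ℕ) (s : ℂ) : ℂ :=
  (2 * Real.pi : ℂ) ^ (-s) * Complex.Gamma s * riemannZeta s * riemannZeta (s - k + 1)

open Filter Topology
open scoped Nat Real

lemma one_lt_re_natCast_add_one {m : ℕ} (hm : m ≠ 0) : 1 < ((m : ℂ) + 1).re := by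
  simpa using Nat.pos_of_ne_zero hm

lemma cos_pi_mul_two_mul_div_two (m : ℕ) : cos (π * (2 * m) / 2) = (-1) ^ m := by
  rw [show (π : ℂ) * (2 * m) / 2 = ((m * π : ℝ) : ℂ) by push_cast; ring, ← ofReal_cos,
    Real.cos_nat_mul_pi]
  push_cast
  rfl

lemma hasDerivAt_cos_pi_mul_div_two_at_even (m : ℕ) :
    HasDerivAt (fun w : ℂ ↦ cos (π * w / 2)) 0 (2 * m) := by
  refine (((hasDerivAt_id' (2 * m : ℂ)).const_mul (π : ℂ)).div_const 2).ccos.congr_deriv ?_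
  rw [show (π : ℂ) * (2 * m) / 2 = m * π by ring, sin_nat_mul_pi]
  ring

lemma hasDerivAt_Gamma_mul_riemannZeta_natCast_add_one {m : ℕ} (hm : m ≠ 0) :
    HasDerivAt (fun s ↦ Gamma s * riemannZeta s)
      (m ! * ((harmonic m - Real.eulerMascheroniConstant) * riemannZeta (m + 1) +
        deriv riemannZeta (m + 1))) (m + 1) := by
  have hζ : HasDerivAt riemannZeta (deriv riemannZeta (m + 1)) (m + 1) :=
    (differentiableAt_riemannZeta
      (ne_of_apply_ne re (one_lt_re_natCast_add_one hm).ne')).hasDerivAt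
  refine ((hasDerivAt_Gamma_nat m).mul hζ).congr_deriv ?_
  rw [Gamma_nat_eq_factorial]
  ring

lemma completedEisensteinL_eq_of_one_lt_re_sub {k : ℕ} {s : ℂ} (hs : 1 < ((k : ℂ) - s).re) :
    completedEisensteinL k s =
      2 * (2 * π) ^ (-(k : ℂ)) * cos (π * (k - s) / 2) *
        (Gamma s * riemannZeta s) * (Gamma (k - s) * riemannZeta (k - s)) := by
  have hpole : ∀ j : ℕ, (k : ℂ) - s ≠ -j := fun j h ↦ by
    have : (0 : ℝ) ≤ j := j.cast_nonneg
    rw [h] at hs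
    simp only [neg_re, natCast_re] at hs
    linarith
  have hone : (k : ℂ) - s ≠ 1 := fun h ↦ by simp [h] at hs
  have h2π : (2 * π : ℂ) ≠ 0 := mul_ne_zero two_ne_zero (ofReal_ne_zero.mpr Real.pi_ne_zero)
  rw [completedEisensteinL, show s - k + 1 = 1 - (k - s) by ring, riemannZeta_one_sub hpole hone,
    show -(k : ℂ) = -s + -(k - s) by ring, cpow_add _ _ h2π]
  ring

lemma completedEisensteinL_eventuallyEq_of_one_lt_re_sub {k : ℕ} {s₀ : ℂ}
    (hs₀ : 1 < ((k : ℂ) - s₀).re) :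
    completedEisensteinL k =ᶠ[𝓝 s₀] fun s ↦
      2 * (2 * π) ^ (-(k : ℂ)) * cos (π * (k - s) / 2) *
        (Gamma s * riemannZeta s) * (Gamma (k - s) * riemannZeta (k - s)) := by
  have hopen : IsOpen {s : ℂ | 1 < ((k : ℂ) - s).re} := isOpen_lt continuous_const (by fun_prop)
  filter_upwards [hopen.mem_nhds hs₀] with s hs
  exact completedEisensteinL_eq_of_one_lt_re_sub hs

theorem hasDerivAt_completedEisensteinL_natCast_add_one {k a b m : ℕ} (ha : a ≠ 0)
    (hk : a + b + 2 = k) (hm : b + 1 = 2 * m) :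
    HasDerivAt (completedEisensteinL k)
      (2 * (2 * π) ^ (-(k : ℂ)) * a ! * b ! * (-1) ^ m * riemannZeta (a + 1) *
        riemannZeta (b + 1) *
        (harmonic a - harmonic b + deriv riemannZeta (a + 1) / riemannZeta (a + 1) -
          deriv riemannZeta (b + 1) / riemannZeta (b + 1))) (a + 1) := by
  have hb : b ≠ 0 := by omega
  have hw : (k : ℂ) - (a + 1) = b + 1 := by rw [← hk]; push_cast; ring
  have hw' : (k : ℂ) - (a + 1) = 2 * m := by rw [hw]; exact_mod_cast hm
  have hcos : HasDerivAt (fun s : ℂ ↦ cos (π * (k - s) / 2)) (-0) (a + 1) :=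
    HasDerivAt.comp_const_sub (f := fun w : ℂ ↦ cos (π * w / 2)) _ _
      (hw' ▸ hasDerivAt_cos_pi_mul_div_two_at_even m)
  have hξa := hasDerivAt_Gamma_mul_riemannZeta_natCast_add_one ha
  have hξb : HasDerivAt (fun s ↦ Gamma (k - s) * riemannZeta (k - s))
      (-(b ! * ((harmonic b - Real.eulerMascheroniConstant) * riemannZeta (b + 1) +
        deriv riemannZeta (b + 1)))) (a + 1) :=
    HasDerivAt.comp_const_sub (f := fun s ↦ Gamma s * riemannZeta s) _ _
      (hw ▸ hasDerivAt_Gamma_mul_riemannZeta_natCast_add_one hb)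
  have hlocal := completedEisensteinL_eventuallyEq_of_one_lt_re_sub (k := k) (s₀ := a + 1)
    (hw ▸ one_lt_re_natCast_add_one hb)
  refine ((((hcos.const_mul _).mul hξa).mul hξb).congr_of_eventuallyEq hlocal).congr_deriv ?_
  have hζa := riemannZeta_ne_zero_of_one_lt_re (one_lt_re_natCast_add_one ha)
  have hζb := riemannZeta_ne_zero_of_one_lt_re (one_lt_re_natCast_add_one hb)
  simp only [Pi.mul_apply]
  rw [hw', cos_pi_mul_two_mul_div_two, ← hw', hw, Gamma_nat_eq_factorial, Gamma_nat_eq_factorial]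
  field_simp
  ring

theorem deriv_completedEisensteinL_at_even_point
    (k : ℕ) (hk4 : k % 4 = 0) (n : ℕ) (hn : 2 * n + 4 ≤ k) :
    deriv (completedEisensteinL k) ((2 * n + 2 : ℕ) : ℂ) =
      2 * (2 * Real.pi : ℂ) ^ (-(k : ℂ)) * (Nat.factorial (2 * n + 1) : ℂ) *
        (Nat.factorial (k - 2 * n - 3) : ℂ) * (-1 : ℂ) ^ (n + 1) *
        riemannZeta ((2 * n + 2 : ℕ) : ℂ) * riemannZeta ((k - 2 * n - 2 : ℕ) : ℂ) *
        ((harmonic (2 * n + 1) : ℂ) - (harmonic (k - 2 * n - 3) : ℂ) +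
          deriv riemannZeta ((2 * n + 2 : ℕ) : ℂ) / riemannZeta ((2 * n + 2 : ℕ) : ℂ) -
          deriv riemannZeta ((k - 2 * n - 2 : ℕ) : ℂ) / riemannZeta ((k - 2 * n - 2 : ℕ) : ℂ)) := by
  have hs : ((2 * n + 2 : ℕ) : ℂ) = ((2 * n + 1 : ℕ) : ℂ) + 1 := by push_cast; ring
  have hw : ((k - 2 * n - 2 : ℕ) : ℂ) = ((k - 2 * n - 3 : ℕ) : ℂ) + 1 := by
    rw [← Nat.cast_add_one, show k - 2 * n - 3 + 1 = k - 2 * n - 2 by omega]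
  -- `k ≡ 0 (mod 4)` is exactly what makes `k/2 - n - 1 ≡ n + 1 (mod 2)`.
  have hsign : (-1 : ℂ) ^ (k / 2 - n - 1) = (-1) ^ (n + 1) := by
    rw [neg_one_pow_eq_pow_mod_two, neg_one_pow_eq_pow_mod_two (n := n + 1),
      show (k / 2 - n - 1) % 2 = (n + 1) % 2 by omega]
  rw [hs, hw, (hasDerivAt_completedEisensteinL_natCast_add_one (by omega) (by omega)
    (show k - 2 * n - 3 + 1 = 2 * (k / 2 - n - 1) by omega)).deriv, hsign]
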